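/- (Corollary 2.3, bounds on the overshoot distribution at the upward passage time.) For every ε ∈ (0,a), q ≥ 0, and every Borel set A ⊆ (0,∞), B₂^{(q)}(x, A; x+ε−a, x+ε) ≤ E[ e^{−q T_{x+ε}^+} 1{T_{x+ε}^+ < ∞, T_{x+ε}^+ < τ_a, X_{T_{x+ε}^+} − (x+ε) ∈ A} ] ≤ B₂^{(q)}(x, A; x−a, x+ε). -/

import Mathlib

open Filter Set
open scoped NNReal ENNReal Topology

noncomputable section

/-- The first time `t ∈ [0,∞)` at which the predicate `P` holds, valued in `[0,∞]`
(with the convention `inf ∅ = ∞`). -/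
def hitTime (P : ℝ≥0 → Prop) : ℝ≥0∞ :=
  sInf ((fun t : ℝ≥0 => (t : ℝ≥0∞)) '' {t | P t})

/-- The first passage time of `f` above the level `y`. -/
def Tplus (f : ℝ≥0 → ℝ) (y : ℝ) : ℝ≥0∞ := hitTime (fun t => y < f t)

/-- The first passage time of `f` below the level `y`. -/
def Tminus (f : ℝ≥0 → ℝ) (y : ℝ) : ℝ≥0∞ := hitTime (fun t => f t < y)

/-- The running maximum `M(t) = sup_{0 ≤ s ≤ t} f(s)`. -/
def runMax (f : ℝ≥0 → ℝ) (t : ℝ≥0) : ℝ := sSup (f '' Set.Iic t)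

/-- The drawdown `Y(t) = M(t) − f(t)`. -/
def drawdown (f : ℝ≥0 → ℝ) (t : ℝ≥0) : ℝ := runMax f t - f t

/-- The first time the drawdown exceeds `a`. -/
def tauD (f : ℝ≥0 → ℝ) (a : ℝ) : ℝ≥0∞ := hitTime (fun t => a < drawdown f t)

/-- Evaluation point of a finite `[0,∞]`-valued time. -/
def ev (T : ℝ≥0∞) : ℝ≥0 := T.toNNReal

end

noncomputable section

open MeasureTheory

open Classical in
/-- Integrand of the two-sided exit quantity `B₁^{(q)}(·;u,v)`, as a function of the
path `f`: `e^{−q T_v^+} 1{T_v^+ < ∞, T_v^+ < T_u^-, f(T_v^+) = v}`. -/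
def b1val (q u v : ℝ) (f : ℝ≥0 → ℝ) : ℝ :=
  if Tplus f v ≠ ⊤ ∧ Tplus f v < Tminus f u ∧ f (ev (Tplus f v)) = v then
    Real.exp (-q * ((ev (Tplus f v) : ℝ))) else 0

open Classical in
/-- Integrand of the overshoot exit quantity `B₂^{(q)}(·,A;u,v)`:
`e^{−q T_v^+} 1{T_v^+ < ∞, T_v^+ < T_u^-, f(T_v^+) − v ∈ A}`. -/
def b2val (q u v : ℝ) (A : Set ℝ) (f : ℝ≥0 → ℝ) : ℝ :=
  if Tplus f v ≠ ⊤ ∧ Tplus f v < Tminus f u ∧ f (ev (Tplus f v)) - v ∈ A then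
    Real.exp (-q * ((ev (Tplus f v) : ℝ))) else 0

open Classical in
/-- Integrand of the downward exit quantity `C^{(q,s)}(·;u,v)`:
`e^{−q T_u^- − s(u − f(T_u^-))} 1{T_u^- < ∞, T_u^- < T_v^+}`. -/
def cval (q s u v : ℝ) (f : ℝ≥0 → ℝ) : ℝ :=
  if Tminus f u ≠ ⊤ ∧ Tminus f u < Tplus f v then
    Real.exp (-q * ((ev (Tminus f u) : ℝ)) - s * (u - f (ev (Tminus f u)))) else 0

open Classical in
/-- `e^{−q T_v^+} 1{T_v^+ < ∞, T_v^+ < τ_a, f(T_v^+) = v}`. -/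
def m1val (q v a : ℝ) (f : ℝ≥0 → ℝ) : ℝ :=
  if Tplus f v ≠ ⊤ ∧ Tplus f v < tauD f a ∧ f (ev (Tplus f v)) = v then
    Real.exp (-q * ((ev (Tplus f v) : ℝ))) else 0

open Classical in
/-- `e^{−q T_v^+} 1{T_v^+ < ∞, T_v^+ < τ_a, f(T_v^+) − v ∈ A}`. -/
def m2val (q v a : ℝ) (A : Set ℝ) (f : ℝ≥0 → ℝ) : ℝ :=
  if Tplus f v ≠ ⊤ ∧ Tplus f v < tauD f a ∧ f (ev (Tplus f v)) - v ∈ A then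
    Real.exp (-q * ((ev (Tplus f v) : ℝ))) else 0

open Classical in
/-- `e^{−q τ_a − s(Y(τ_a) − a)} 1{τ_a < ∞, τ_a < T_v^+}`. -/
def m3val (q s a v : ℝ) (f : ℝ≥0 → ℝ) : ℝ :=
  if tauD f a ≠ ⊤ ∧ tauD f a < Tplus f v then
    Real.exp (-q * ((ev (tauD f a) : ℝ)) - s * (drawdown f (ev (tauD f a)) - a)) else 0

end

open MeasureTheory

section Aux

lemma hitTime_le {P : ℝ≥0 → Prop} {t : ℝ≥0} (h : P t) : hitTime P ≤ (t : ℝ≥0∞) :=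
  sInf_le ⟨t, h, rfl⟩

lemma le_hitTime {P : ℝ≥0 → Prop} {c : ℝ≥0∞} (h : ∀ t, P t → c ≤ (t : ℝ≥0∞)) :
    c ≤ hitTime P := by
  apply le_sInf
  rintro _ ⟨t, ht, rfl⟩
  exact h t ht

/-- Left key pathwise fact: if the upward passage at `v` happens before going below `v - a`,
with a strictly positive overshoot, then it happens strictly before the drawdown time. -/
lemma left_key {f : ℝ≥0 → ℝ} {v a : ℝ} (ha : 0 < a)
    (hrc : ∀ t : ℝ≥0, ContinuousWithinAt f (Set.Ici t) t)
    (h1 : Tplus f v ≠ ⊤) (h2 : Tplus f v < Tminus f (v - a))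
    (h3 : v < f (ev (Tplus f v))) : Tplus f v < tauD f a := by
  set t₀ : ℝ≥0 := ev (Tplus f v) with ht₀
  have hT : ((t₀ : ℝ≥0∞)) = Tplus f v := ENNReal.coe_toNNReal h1
  obtain ⟨δ, hδpos, hδ⟩ := Metric.continuousWithinAt_iff.1 (hrc t₀) (a / 2) (by linarith)
  set δ' : ℝ≥0 := δ.toNNReal with hδ'
  have hδ'c : (δ' : ℝ) = δ := Real.coe_toNNReal δ hδpos.le
  have hδ'pos : 0 < δ' := by
    rw [← NNReal.coe_lt_coe, hδ'c]; exact hδpos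
  -- every point ≤ t < t₀ has f t ≤ v
  have hup : ∀ s : ℝ≥0, s < t₀ → f s ≤ v := by
    intro s hs
    by_contra hc
    push_neg at hc
    have h5 : Tplus f v ≤ (s : ℝ≥0∞) := hitTime_le (P := fun t => v < f t) hc
    have h6 : ((t₀ : ℝ≥0∞)) ≤ (s : ℝ≥0∞) := hT.le.trans h5
    exact absurd h6 (not_le.2 (by exact_mod_cast hs))
  have key : ((t₀ : ℝ≥0∞)) + (δ' : ℝ≥0∞) ≤ tauD f a := by
    apply le_hitTime
    intro t ht
    rw [← ENNReal.coe_add, ENNReal.coe_le_coe]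
    by_contra hc
    push_neg at hc
    rcases lt_or_ge t t₀ with hlt | hge
    · -- before t₀ : drawdown ≤ a since f stays in [v-a, v]
      have hfl : v - a ≤ f t := by
        by_contra hfc
        push_neg at hfc
        have h4 : Tminus f (v - a) ≤ (t : ℝ≥0∞) :=
          hitTime_le (P := fun s => f s < v - a) hfc
        have : Tminus f (v - a) < Tminus f (v - a) := by
          calc Tminus f (v - a) ≤ (t : ℝ≥0∞) := h4
            _ < (t₀ : ℝ≥0∞) := by exact_mod_cast hlt
            _ = Tplus f v := hT
            _ < Tminus f (v - a) := h2
        exact absurd this (lt_irrefl _)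
      have hM : runMax f t ≤ v := by
        refine csSup_le ⟨f t, ⟨t, le_refl t, rfl⟩⟩ ?_
        rintro _ ⟨s, hs, rfl⟩
        exact hup s (lt_of_le_of_lt hs hlt)
      have : drawdown f t ≤ a := by
        unfold drawdown; linarith
      linarith
    · -- t ∈ [t₀, t₀ + δ') : drawdown ≤ a by right-continuity
      have hdist : ∀ s : ℝ≥0, t₀ ≤ s → s ≤ t → |f s - f t₀| < a / 2 := by
        intro s hs1 hs2
        have hd : dist s t₀ < δ := by
          rw [NNReal.dist_eq, abs_of_nonneg (sub_nonneg.2 (NNReal.coe_le_coe.2 hs1))]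
          have : (s : ℝ) < (t₀ : ℝ) + δ' := by
            have : s < t₀ + δ' := lt_of_le_of_lt hs2 hc
            exact_mod_cast this
          linarith [hδ'c]
        have := hδ hs1 hd
        rwa [Real.dist_eq] at this
      have hM : runMax f t ≤ f t₀ + a / 2 := by
        refine csSup_le ⟨f t, ⟨t, le_refl t, rfl⟩⟩ ?_
        rintro _ ⟨s, hs, rfl⟩
        rcases lt_or_ge s t₀ with hslt | hsge
        · have := hup s hslt; linarith
        · have := hdist s hsge hs
          have := abs_lt.1 this
          linarith [this.2]
      have hft : f t₀ - a / 2 < f t := by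
        have := abs_lt.1 (hdist t hge (le_refl t))
        linarith [this.1]
      have : drawdown f t ≤ a := by
        unfold drawdown; linarith
      linarith
  calc Tplus f v = (t₀ : ℝ≥0∞) := hT.symm
    _ < (t₀ : ℝ≥0∞) + (δ' : ℝ≥0∞) := by
        apply ENNReal.lt_add_right ENNReal.coe_ne_top
        exact_mod_cast hδ'pos.ne'
    _ ≤ tauD f a := key

/-- Right key pathwise fact: the drawdown time is at most the downward passage below `x - a`. -/
lemma tauD_le_Tminus {f : ℝ≥0 → ℝ} {x a : ℝ} (hf0 : f 0 = x)
    (hbdd : ∀ b : ℝ≥0, ∃ C : ℝ, ∀ t ≤ b, |f t| ≤ C) :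
    tauD f a ≤ Tminus f (x - a) := by
  apply le_hitTime
  intro t ht
  apply hitTime_le
  obtain ⟨C, hC⟩ := hbdd t
  have hbA : BddAbove (f '' Set.Iic t) := by
    refine ⟨C, ?_⟩
    rintro _ ⟨s, hs, rfl⟩
    exact (abs_le.1 (hC s hs)).2
  have hM : x ≤ runMax f t := by
    rw [← hf0]
    exact le_csSup hbA ⟨0, (zero_le : (0 : ℝ≥0) ≤ t), rfl⟩
  show a < drawdown f t
  unfold drawdown
  linarith

lemma b2_le_m2 {q v a : ℝ} {A : Set ℝ} (hA0 : A ⊆ Set.Ioi 0) (ha : 0 < a)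
    {f : ℝ≥0 → ℝ} (hrc : ∀ t : ℝ≥0, ContinuousWithinAt f (Set.Ici t) t) :
    b2val q (v - a) v A f ≤ m2val q v a A f := by
  unfold b2val m2val
  split_ifs with h1 h2
  · exact le_refl _
  · exfalso
    have h3 : v < f (ev (Tplus f v)) := by
      have := hA0 h1.2.2
      simp only [Set.mem_Ioi] at this
      linarith
    exact h2 ⟨h1.1, left_key ha hrc h1.1 h1.2.1 h3, h1.2.2⟩
  · exact Real.exp_nonneg _
  · exact le_refl _

lemma m2_le_b2 {q v x a : ℝ} {A : Set ℝ}
    {f : ℝ≥0 → ℝ} (hf0 : f 0 = x)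
    (hbdd : ∀ b : ℝ≥0, ∃ C : ℝ, ∀ t ≤ b, |f t| ≤ C) :
    m2val q v a A f ≤ b2val q (x - a) v A f := by
  unfold m2val b2val
  split_ifs with h1 h2
  · exact le_refl _
  · exact absurd ⟨h1.1, lt_of_lt_of_le h1.2.1 (tauD_le_Tminus hf0 hbdd), h1.2.2⟩ h2
  · exact Real.exp_nonneg _
  · exact le_refl _

end Aux

/-- **Corollary 2.3, bounds on the overshoot distribution at the upward passage time.**
For every Borel `A ⊆ (0,∞)`:
`B₂^{(q)}(x, A; x+ε−a, x+ε) ≤ E[e^{−q T_{x+ε}^+} 1{T_{x+ε}^+ < ∞, T_{x+ε}^+ < τ_a,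
X_{T_{x+ε}^+} − (x+ε) ∈ A}] ≤ B₂^{(q)}(x, A; x−a, x+ε)`. -/
theorem overshoot_distribution_bounds
    {Ω : Type*} [MeasurableSpace Ω] (ℙ : Measure Ω) [IsProbabilityMeasure ℙ]
    (X : Ω → ℝ≥0 → ℝ) (x a : ℝ) (ha : 0 < a)
    (hrc : ∀ ω (t : ℝ≥0), ContinuousWithinAt (X ω) (Set.Ici t) t)
    (hbdd : ∀ ω (b : ℝ≥0), ∃ C : ℝ, ∀ t ≤ b, |X ω t| ≤ C)
    (hX0 : ∀ ω, X ω 0 = x)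
    (ε q : ℝ) (hε : 0 < ε) (hεa : ε < a) (hq : 0 ≤ q)
    (A : Set ℝ) (hA : MeasurableSet A) (hA0 : A ⊆ Set.Ioi 0)
    (hintL : Integrable (fun ω => b2val q (x + ε - a) (x + ε) A (X ω)) ℙ)
    (hintM : Integrable (fun ω => m2val q (x + ε) a A (X ω)) ℙ)
    (hintR : Integrable (fun ω => b2val q (x - a) (x + ε) A (X ω)) ℙ) :
    (∫ ω, b2val q (x + ε - a) (x + ε) A (X ω) ∂ℙ) ≤
      (∫ ω, m2val q (x + ε) a A (X ω) ∂ℙ) ∧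
    (∫ ω, m2val q (x + ε) a A (X ω) ∂ℙ) ≤
      ∫ ω, b2val q (x - a) (x + ε) A (X ω) ∂ℙ := by
  constructor
  · exact integral_mono hintL hintM fun ω => b2_le_m2 hA0 ha (hrc ω)
  · exact integral_mono hintM hintR fun ω => m2_le_b2 (hX0 ω) (hbdd ω)
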